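/- arXiv:2303.17033 — 10 statements merged into one kernel-verified Lean document; each statement's English description precedes it below -/
import Mathlib

section
/- A player-centered incomplete cooperative game (N, K, v) is P-extendable (admits an extension to a positive game on all of 2^N) if and only if it is positive, i.e., its Möbius transform m^v(S) = Σ_{T⊆S, T∈K} (-1)^{|S\T|} v(T) is nonnegative for all S ∈ K. -/
open Finset

/-- Möbius transform of a (complete) cooperative game `w : 2^N → ℝ`. -/
noncomputable def mobius {α : Type*} [DecidableEq α] (w : Finset α → ℝ) (T : Finset α) : ℝ :=
  ∑ S ∈ T.powerset, (-1 : ℝ) ^ (T.card - S.card) * w S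

/-- Möbius transform of an `i`-centered incomplete game `v`, defined for `S ∈ K`,
where `K = {S : i ∈ S} ∪ {∅}`: `m^v(S) = Σ_{T ⊆ S, T ∈ K} (-1)^{|S \ T|} v(T)`. -/
noncomputable def mobiusK {α : Type*} [DecidableEq α] (i : α) (v : Finset α → ℝ)
    (S : Finset α) : ℝ :=
  ∑ T ∈ S.powerset.filter (fun T => i ∈ T ∨ T = ∅), (-1 : ℝ) ^ ((S \ T).card) * v T

/-!
For `i ∈ S`, the transform `m^v(S)` of the incomplete game is the Möbius transform, at
`S \ {i}`, of the game `T ↦ v (T ∪ {i})`. For any game `w`, the transform of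
`T ↦ w (T ∪ {i})` at `R ∌ i` is `m^w(R) + m^w(R ∪ {i})`, which gives positivity of every
extendable game. Conversely, if `v` is positive, putting Möbius mass `m^v(S)` on each
`S ∋ i` and `0` elsewhere defines a positive game, and Möbius inversion shows it extends `v`.
-/

section

variable {α : Type*} [DecidableEq α]

theorem mobius_empty (w : Finset α → ℝ) : mobius w ∅ = w ∅ := by
  simp [mobius]

theorem mobius_congr {f g : Finset α → ℝ} {T : Finset α} (h : ∀ S ⊆ T, f S = g S) :
    mobius f T = mobius g T :=
  sum_congr rfl fun S hS => by rw [h S (mem_powerset.mp hS)]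

theorem mobius_comp_insert (w : Finset α → ℝ) {a : α} {T : Finset α} (ha : a ∉ T) :
    mobius (fun S => w (insert a S)) T = mobius w T + mobius w (insert a T) := by
  have hlow : ∑ S ∈ T.powerset, (-1 : ℝ) ^ ((insert a T).card - S.card) * w S = -mobius w T := by
    rw [mobius, ← sum_neg_distrib]
    refine sum_congr rfl fun S hS => ?_
    rw [card_insert_of_notMem ha, Nat.succ_sub (card_le_card (mem_powerset.mp hS)), pow_succ]
    ring
  have hhigh : ∑ S ∈ T.powerset, (-1 : ℝ) ^ ((insert a T).card - (insert a S).card) * w (insert a S)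
      = mobius (fun S => w (insert a S)) T := by
    refine sum_congr rfl fun S hS => ?_
    rw [card_insert_of_notMem ha, card_insert_of_notMem fun h => ha (mem_powerset.mp hS h),
      Nat.add_sub_add_right]
  have hsplit : mobius w (insert a T) = -mobius w T + mobius (fun S => w (insert a S)) T := by
    rw [← hlow, ← hhigh]
    exact sum_powerset_insert ha _
  rw [hsplit]
  ring

theorem sum_powerset_mobius (w : Finset α → ℝ) (S : Finset α) :
    ∑ T ∈ S.powerset, mobius w T = w S := by
  induction S using Finset.induction_on generalizing w with
  | empty => simp [mobius_empty]
  | insert a S ha ih =>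
    rw [sum_powerset_insert ha, ← sum_add_distrib, ← ih fun T => w (insert a T)]
    refine sum_congr rfl fun T hT => ?_
    rw [mobius_comp_insert w fun h => ha (mem_powerset.mp hT h)]

theorem mobius_sum_powerset (m : Finset α → ℝ) (T : Finset α) :
    mobius (fun S => ∑ U ∈ S.powerset, m U) T = m T := by
  induction T using Finset.induction_on generalizing m with
  | empty => simp [mobius_empty]
  | insert a T ha ih =>
    have hshift : mobius (fun S => ∑ U ∈ (insert a S).powerset, m U) T
        = m T + m (insert a T) := by
      rw [← ih fun U => m U + m (insert a U)]
      refine mobius_congr fun S hS => ?_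
      rw [sum_powerset_insert fun h => ha (hS h), sum_add_distrib]
    have hinsert := mobius_comp_insert (fun S => ∑ U ∈ S.powerset, m U) ha
    rw [hshift, ih] at hinsert
    linarith

theorem mobiusK_empty (i : α) (v : Finset α → ℝ) : mobiusK i v ∅ = v ∅ := by
  rw [mobiusK, powerset_empty, filter_singleton, if_pos (Or.inr rfl), sum_singleton]
  simp

theorem mobiusK_insert {i : α} {v : Finset α → ℝ} (hv : v ∅ = 0) {R : Finset α} (hi : i ∉ R) :
    mobiusK i v (insert i R) = mobius (fun T => v (insert i T)) R := by
  rw [mobiusK, sum_filter, sum_powerset_insert hi]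
  have hlow : ∀ T ∈ R.powerset,
      (if i ∈ T ∨ T = ∅ then (-1 : ℝ) ^ ((insert i R \ T).card) * v T else 0) = 0 :=
    fun T hT => by
      have hiT : i ∉ T := fun h => hi (mem_powerset.mp hT h)
      split_ifs with h
      · rw [h.resolve_left hiT, hv, mul_zero]
      · rfl
  rw [sum_eq_zero hlow, zero_add, mobius]
  refine sum_congr rfl fun T hT => ?_
  have hTR := mem_powerset.mp hT
  rw [if_pos (Or.inl (mem_insert_self i T)), insert_sdiff_insert,
    sdiff_insert_of_notMem hi, card_sdiff_of_subset hTR]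

theorem sum_powerset_ite_mobiusK {i : α} {v : Finset α → ℝ} (hv : v ∅ = 0) {S : Finset α}
    (hiS : i ∈ S) :
    ∑ U ∈ S.powerset, (if i ∈ U then mobiusK i v U else 0) = v S := by
  have hi := notMem_erase i S
  rw [← insert_erase hiS, sum_powerset_insert hi, ← sum_add_distrib]
  refine (sum_congr rfl fun U hU => ?_).trans
    (sum_powerset_mobius (fun T => v (insert i T)) (S.erase i))
  have hiU : i ∉ U := fun h => hi (mem_powerset.mp hU h)
  rw [if_neg hiU, if_pos (mem_insert_self i U), zero_add, mobiusK_insert hv hiU]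

end

theorem stmt0_general {α : Type*} [DecidableEq α] (i : α) (v : Finset α → ℝ)
    (hv : v ∅ = 0) :
    (∃ w : Finset α → ℝ, w ∅ = 0 ∧ (∀ T : Finset α, 0 ≤ mobius w T) ∧
        (∀ S : Finset α, (i ∈ S ∨ S = ∅) → w S = v S)) ↔
      (∀ S : Finset α, (i ∈ S ∨ S = ∅) → 0 ≤ mobiusK i v S) := by
  constructor
  · rintro ⟨w, -, hpos, hext⟩ S (hiS | rfl)
    · have hvw : (fun T => v (insert i T)) = fun T => w (insert i T) :=
        funext fun T => (hext _ (Or.inl (mem_insert_self i T))).symm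
      rw [← insert_erase hiS, mobiusK_insert hv (notMem_erase i S), hvw,
        mobius_comp_insert w (notMem_erase i S), insert_erase hiS]
      exact add_nonneg (hpos _) (hpos S)
    · rw [mobiusK_empty, hv]
  · intro hpos
    set m : Finset α → ℝ := fun U => if i ∈ U then mobiusK i v U else 0
    refine ⟨fun X => ∑ U ∈ X.powerset, m U, by simp [m], fun T => ?_, ?_⟩
    · rw [mobius_sum_powerset]
      by_cases hiT : i ∈ T
      · simpa [m, hiT] using hpos T (Or.inl hiT)
      · simp [m, hiT]
    · rintro S (hiS | rfl)
      · exact sum_powerset_ite_mobiusK hv hiS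
      · simp [m, hv]

/-- A player-centered incomplete game `(N, K, v)` is P-extendable iff it is positive. -/
theorem stmt0 {α : Type*} [Fintype α] [DecidableEq α] (i : α) (v : Finset α → ℝ)
    (hv : v ∅ = 0) :
    (∃ w : Finset α → ℝ, w ∅ = 0 ∧ (∀ T : Finset α, 0 ≤ mobius w T) ∧
        (∀ S : Finset α, (i ∈ S ∨ S = ∅) → w S = v S)) ↔
      (∀ S : Finset α, (i ∈ S ∨ S = ∅) → 0 ≤ mobiusK i v S) :=
  stmt0_general i v hv
end

section
/- If (N,p) is any positive extension of an i-centered incomplete game (N,K,v), then for every S ∈ K one has m^v(S) = m^p(S) + m^p(S \ {i}), and in particular m^v(S) ≥ 0. -/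
open Finset

/-- For any positive extension `p` of an `i`-centered incomplete game `(N,K,v)`:
`m^v(S) = m^p(S) + m^p(S \ {i})` for every `S ∈ K`, and in particular `m^v(S) ≥ 0`. -/
theorem stmt1 {α : Type*} [Fintype α] [DecidableEq α] (i : α) (v p : Finset α → ℝ)
    (hv : v ∅ = 0) (hp0 : p ∅ = 0)
    (hext : ∀ S : Finset α, (i ∈ S ∨ S = ∅) → p S = v S)
    (hpos : ∀ T : Finset α, 0 ≤ mobius p T) :
    ∀ S : Finset α, (i ∈ S ∨ S = ∅) →
      mobiusK i v S = mobius p S + mobius p (S \ {i}) ∧ 0 ≤ mobiusK i v S := by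
  intro S hS
  have key : mobiusK i v S = mobius p S + mobius p (S \ {i}) := by
    rcases hS with hiS | rfl
    · have h1 : mobiusK i v S =
          ∑ T ∈ S.powerset.filter (fun T => i ∈ T), (-1:ℝ)^(S.card - T.card) * p T := by
        rw [mobiusK, Finset.sum_filter, Finset.sum_filter]
        apply Finset.sum_congr rfl
        intro T hT
        rw [Finset.mem_powerset] at hT
        by_cases hi : i ∈ T
        · simp [hi, hext T (Or.inl hi), Finset.card_sdiff_of_subset hT]
        · by_cases he : T = ∅
          · simp [hi, he, hv]
          · simp [hi, he]
      have h2 : mobius p S =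
          (∑ T ∈ S.powerset.filter (fun T => i ∈ T), (-1:ℝ)^(S.card - T.card) * p T)
          + (∑ T ∈ S.powerset.filter (fun T => ¬ i ∈ T), (-1:ℝ)^(S.card - T.card) * p T) := by
        rw [mobius, ← Finset.sum_filter_add_sum_filter_not S.powerset (fun T => i ∈ T)]
      have hcard : S.card = (S \ {i}).card + 1 := by
        have h1 : ({i} : Finset α) ⊆ S := Finset.singleton_subset_iff.mpr hiS
        have h2 : 1 ≤ S.card := Finset.card_pos.mpr ⟨i, hiS⟩
        rw [Finset.card_sdiff_of_subset h1, Finset.card_singleton]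
        omega
      have h3 : (∑ T ∈ S.powerset.filter (fun T => ¬ i ∈ T), (-1:ℝ)^(S.card - T.card) * p T)
          = - mobius p (S \ {i}) := by
        have hset : S.powerset.filter (fun T => ¬ i ∈ T) = (S \ {i}).powerset := by
          ext T
          simp only [Finset.mem_filter, Finset.mem_powerset, Finset.subset_sdiff,
            Finset.disjoint_singleton_right]
        rw [hset, mobius, ← Finset.sum_neg_distrib]
        apply Finset.sum_congr rfl
        intro T hT
        rw [Finset.mem_powerset] at hT
        have hTc : T.card ≤ (S \ {i}).card := Finset.card_le_card hT
        have he : S.card - T.card = ((S \ {i}).card - T.card) + 1 := by omega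
        rw [he, pow_succ]
        ring
      rw [h1, h2, h3]; ring
    · simp [mobiusK, mobius, hv, hp0, Finset.sum_filter]
  exact ⟨key, key ▸ add_nonneg (hpos S) (hpos _)⟩
end

section
/- Every i-centered incomplete game (N,K,v) that is superadditive on K admits a superadditive extension to all of 2^N. -/
open Finset

/-- Every `i`-centered incomplete game `(N,K,v)` that is superadditive on
`K = {S : i ∈ S} ∪ {∅}` admits a superadditive extension to all of `2^N`. -/
theorem stmt4 {α : Type*} [Fintype α] [DecidableEq α] (i : α) (v : Finset α → ℝ)
    (hv : v ∅ = 0)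
    (hsup : ∀ S T : Finset α, (i ∈ S ∨ S = ∅) → (i ∈ T ∨ T = ∅) → Disjoint S T →
      v S + v T ≤ v (S ∪ T)) :
    ∃ w : Finset α → ℝ, (∀ S : Finset α, (i ∈ S ∨ S = ∅) → w S = v S) ∧
      ∀ S T : Finset α, Disjoint S T → w S + w T ≤ w (S ∪ T) := by
  classical
  set M : ℝ := ∑ A ∈ (Finset.univ : Finset α).powerset, |v A| with hM
  have hM0 : 0 ≤ M := Finset.sum_nonneg fun B _ => abs_nonneg _
  have hMle : ∀ A : Finset α, |v A| ≤ M := fun A =>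
    Finset.single_le_sum (fun B _ => abs_nonneg (v B))
      (Finset.mem_powerset.2 (Finset.subset_univ A))
  refine ⟨fun S => if i ∈ S then v S else -(2 * M) * S.card, ?_, ?_⟩
  · intro S hS
    rcases hS with h | h
    · simp [h]
    · subst h; simp [hv]
  · intro S T hd
    have key : ∀ S T : Finset α, Disjoint S T → i ∈ S → i ∉ T →
        v S + -(2 * M) * T.card ≤ v (S ∪ T) := by
      intro S T hd hS hT
      by_cases hTe : T = ∅
      · subst hTe; simp [hS]
      · have h1 : (1 : ℝ) ≤ T.card := by
          exact_mod_cast Finset.one_le_card.2 (Finset.nonempty_iff_ne_empty.2 hTe)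
        have h2 : -(2 * M) * T.card ≤ -(2 * M) := by nlinarith
        have h3 : v S ≤ M := (abs_le.1 (hMle S)).2
        have h4 : -M ≤ v (S ∪ T) := (abs_le.1 (hMle (S ∪ T))).1
        linarith
    by_cases hS : i ∈ S <;> by_cases hT : i ∈ T
    · exact (Finset.disjoint_left.1 hd hS hT).elim
    · have := key S T hd hS hT
      simp only [hS, hT, Finset.mem_union, if_true, if_false, if_pos (Or.inl hS)]
      simpa using this
    · have := key T S hd.symm hT hS
      rw [Finset.union_comm T S] at this
      have hU : i ∈ S ∪ T := Finset.mem_union.2 (Or.inr hT)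
      simp only [hS, hT, hU, if_true, if_false]
      linarith
    · have hU : i ∉ S ∪ T := by simp [hS, hT]
      simp only [hS, hT, hU, if_false]
      rw [Finset.card_union_of_disjoint hd]
      push_cast
      ring_nf
      linarith
end

section
/- The recession cone C^n(K,0) of the set of convex extensions of an i-centered incomplete game is pointed: if w : 2^N → ℝ is convex (w(S)+w(T) ≤ w(S∩T)+w(S∪T) for all S,T) and w(S)=0 for all S ∈ K, and −w also has these properties, then w = 0. -/
open Finset

/-!
Both `w` and `-w` being supermodular makes `w` modular, and a modular game with `w ∅ = 0` is
additive: `w S = ∑ j ∈ S, w {j}`. Every singleton value vanishes, since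
`w {i} + w {j} = w ({i} ∩ {j}) + w ({i} ∪ {j})` and all sets other than `{j}` here lie in `K`.
-/

section ModularGame

variable {α M : Type*} [DecidableEq α] [AddCommMonoid M] {w : Finset α → M}

theorem eq_sum_singleton_of_modular (hmod : ∀ S T, w S + w T = w (S ∩ T) + w (S ∪ T))
    (h0 : w ∅ = 0) (S : Finset α) : w S = ∑ j ∈ S, w {j} := by
  induction S using Finset.induction_on with
  | empty => simpa using h0
  | insert j S hj ih =>
    have h := hmod {j} S
    rw [singleton_inter_of_notMem hj, ← insert_eq, h0, zero_add] at h
    rw [sum_insert hj, ← ih, h]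

theorem singleton_eq_zero_of_modular_of_vanishing (i : α)
    (hmod : ∀ S T, w S + w T = w (S ∩ T) + w (S ∪ T))
    (hK : ∀ S, (i ∈ S ∨ S = ∅) → w S = 0) (j : α) : w {j} = 0 := by
  have hinter : w ({i} ∩ {j}) = 0 := hK _ (by by_cases hij : i = j <;> simp [hij])
  have h := hmod {i} {j}
  rwa [hinter, hK ({i} ∪ {j}) (by simp), hK {i} (by simp), zero_add, add_zero] at h

end ModularGame

theorem stmt5_general {α : Type*} [DecidableEq α] (i : α) (w : Finset α → ℝ)
    (hK : ∀ S : Finset α, (i ∈ S ∨ S = ∅) → w S = 0)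
    (hconv : ∀ S T : Finset α, w S + w T ≤ w (S ∩ T) + w (S ∪ T))
    (hconv' : ∀ S T : Finset α, (-w S) + (-w T) ≤ (-w (S ∩ T)) + (-w (S ∪ T))) :
    w = 0 := by
  have hmod : ∀ S T, w S + w T = w (S ∩ T) + w (S ∪ T) := fun S T =>
    le_antisymm (hconv S T) (by linarith [hconv' S T])
  funext S
  rw [eq_sum_singleton_of_modular hmod (hK ∅ (Or.inr rfl)) S, Pi.zero_apply]
  exact sum_eq_zero fun j _ => singleton_eq_zero_of_modular_of_vanishing i hmod hK j

/-- The recession cone `C^n(K,0)` of the set of convex extensions is pointed: if a game `w`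
vanishes on `K = {S : i ∈ S} ∪ {∅}` and both `w` and `-w` are convex (supermodular),
then `w = 0`. -/
theorem stmt5 {α : Type*} [Fintype α] [DecidableEq α] (i : α) (w : Finset α → ℝ)
    (hK : ∀ S : Finset α, (i ∈ S ∨ S = ∅) → w S = 0)
    (hconv : ∀ S T : Finset α, w S + w T ≤ w (S ∩ T) + w (S ∪ T))
    (hconv' : ∀ S T : Finset α, (-w S) + (-w T) ≤ (-w (S ∩ T)) + (-w (S ∪ T))) :
    w = 0 :=
  stmt5_general i w hK hconv hconv'
end

section
/- A cooperative game (N,w) is convex (supermodular) if and only if for every A ⊆ B ⊆ N with |A| = 2, the sum Σ_{T : A ⊆ T ⊆ B} m^w(T) is nonnegative, where m^w is the Möbius transform of w. -/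
open Finset

lemma sum_between {α : Type*} [DecidableEq α] (B S : Finset α) (hS : S ⊆ B) :
    ∑ T ∈ B.powerset.filter (fun T => S ⊆ T), (-1 : ℝ) ^ (T.card - S.card)
      = if S = B then 1 else 0 := by
  have hre : ∑ T ∈ B.powerset.filter (fun T => S ⊆ T), (-1 : ℝ) ^ (T.card - S.card)
      = ∑ U ∈ (B \ S).powerset, (-1 : ℝ) ^ U.card := by
    refine Finset.sum_bij' (fun T _ => T \ S) (fun U _ => S ∪ U) ?_ ?_ ?_ ?_ ?_
    · intro T hT
      simp only [mem_filter, mem_powerset] at hT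
      exact mem_powerset.2 (sdiff_subset_sdiff hT.1 le_rfl)
    · intro U hU
      simp only [mem_powerset] at hU
      simp only [mem_filter, mem_powerset]
      constructor
      · exact union_subset hS (hU.trans sdiff_subset)
      · exact subset_union_left
    · intro T hT
      simp only [mem_filter, mem_powerset] at hT
      exact union_sdiff_of_subset hT.2
    · intro U hU
      simp only [mem_powerset] at hU
      have : Disjoint S U := disjoint_of_subset_right hU sdiff_disjoint.symm
      show (S ∪ U) \ S = U
      rw [union_sdiff_cancel_left this]
    · intro T hT
      simp only [mem_filter, mem_powerset] at hT
      rw [card_sdiff_of_subset hT.2]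
  rw [hre]
  have : ∑ U ∈ (B \ S).powerset, (-1 : ℝ) ^ U.card
      = ((∑ U ∈ (B \ S).powerset, (-1 : ℤ) ^ U.card : ℤ) : ℝ) := by
    push_cast; rfl
  rw [this, Finset.sum_powerset_neg_one_pow_card]
  have hiff : B \ S = ∅ ↔ S = B := by
    rw [sdiff_eq_empty_iff_subset]
    exact ⟨fun h => subset_antisymm hS h, fun h => h ▸ le_rfl⟩
  by_cases h : S = B
  · simp [h]
  · rw [if_neg (fun he => h (hiff.1 he)), if_neg h]; simp

lemma mobius_inversion {α : Type*} [DecidableEq α] (w : Finset α → ℝ) (B : Finset α) :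
    ∑ T ∈ B.powerset, mobius w T = w B := by
  unfold mobius
  rw [Finset.sum_comm' (s := B.powerset) (t := fun T => T.powerset)
    (t' := B.powerset) (s' := fun S => B.powerset.filter (fun T => S ⊆ T))
    (h := by
      intro T S
      simp only [mem_powerset, mem_filter]
      constructor
      · rintro ⟨h1, h2⟩; exact ⟨⟨h1, h2⟩, h2.trans h1⟩
      · rintro ⟨⟨h1, h2⟩, _⟩; exact ⟨h1, h2⟩)]
  have : ∀ S ∈ B.powerset,
      ∑ T ∈ B.powerset.filter (fun T => S ⊆ T), (-1 : ℝ) ^ (T.card - S.card) * w S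
        = (if S = B then 1 else 0) * w S := by
    intro S hS
    rw [← Finset.sum_mul, sum_between B S (mem_powerset.1 hS)]
  rw [Finset.sum_congr rfl this]
  simp

lemma mobius_inversion_erase {α : Type*} [DecidableEq α] (w : Finset α → ℝ)
    (B : Finset α) (i : α) :
    ∑ T ∈ B.powerset.filter (fun T => i ∉ T), mobius w T = w (B.erase i) := by
  have hset : B.powerset.filter (fun T => i ∉ T) = (B.erase i).powerset := by
    ext T
    simp only [mem_filter, mem_powerset, subset_erase]
  rw [hset, mobius_inversion]

lemma key_identity {α : Type*} [DecidableEq α] (w : Finset α → ℝ) (B : Finset α)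
    (i j : α) (hij : i ≠ j) :
    ∑ T ∈ B.powerset.filter (fun T => ({i, j} : Finset α) ⊆ T), mobius w T
      = w B - w (B.erase i) - w (B.erase j) + w ((B.erase i).erase j) := by
  classical
  set P := B.powerset
  have h1 : ∑ T ∈ P.filter (fun T => i ∈ T), mobius w T
      = w B - w (B.erase i) := by
    have := Finset.sum_filter_add_sum_filter_not P (fun T => i ∈ T) (mobius w)
    have h2 := mobius_inversion_erase w B i
    have h3 := mobius_inversion w B
    simp only [P]
    linarith [this, h2, h3]
  have h4 : ∑ T ∈ P.filter (fun T => i ∈ T ∧ j ∈ T), mobius w T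
      = (∑ T ∈ P.filter (fun T => i ∈ T), mobius w T)
        - ∑ T ∈ P.filter (fun T => i ∈ T ∧ j ∉ T), mobius w T := by
    have := Finset.sum_filter_add_sum_filter_not (P.filter (fun T => i ∈ T))
      (fun T => j ∈ T) (mobius w)
    rw [Finset.filter_filter, Finset.filter_filter] at this
    linarith [this]
  have h5 : ∑ T ∈ P.filter (fun T => i ∈ T ∧ j ∉ T), mobius w T
      = w (B.erase j) - w ((B.erase j).erase i) := by
    have ha : P.filter (fun T => i ∈ T ∧ j ∉ T)
        = ((B.erase j).powerset).filter (fun T => i ∈ T) := by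
      ext T
      simp only [mem_filter, mem_powerset, subset_erase, P]
      tauto
    have hb := Finset.sum_filter_add_sum_filter_not ((B.erase j).powerset)
      (fun T => i ∈ T) (mobius w)
    have hc := mobius_inversion_erase w (B.erase j) i
    have hd := mobius_inversion w (B.erase j)
    rw [ha]
    linarith [hb, hc, hd]
  have hpred : ∀ T : Finset α, (({i, j} : Finset α) ⊆ T) = (i ∈ T ∧ j ∈ T) := by
    intro T
    simp [insert_subset_iff]
  have erase_comm' : (B.erase j).erase i = (B.erase i).erase j := Finset.erase_right_comm
  simp only [hpred]
  rw [h4, h1, h5, erase_comm']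
  ring

lemma pair_of_sum {α : Type*} [DecidableEq α] (w : Finset α → ℝ)
    (hyp : ∀ A B : Finset α, A ⊆ B → A.card = 2 →
      0 ≤ ∑ T ∈ B.powerset.filter (fun T => A ⊆ T), mobius w T)
    (S : Finset α) (i j : α) (hi : i ∉ S) (hj : j ∉ S) (hij : i ≠ j) :
    w (insert i S) + w (insert j S) ≤ w S + w (insert i (insert j S)) := by
  set B := insert i (insert j S) with hB
  have hiB : i ∈ B := mem_insert_self _ _
  have hjB : j ∈ B := mem_insert_of_mem (mem_insert_self _ _)
  have hAB : ({i, j} : Finset α) ⊆ B := by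
    intro x hx
    simp only [mem_insert, mem_singleton] at hx
    rcases hx with rfl | rfl
    · exact hiB
    · exact hjB
  have hcard : ({i, j} : Finset α).card = 2 := card_pair hij
  have h := hyp {i, j} B hAB hcard
  rw [key_identity w B i j hij] at h
  have hiJS : i ∉ insert j S := by simp [hi, hij]
  have e1 : B.erase i = insert j S := by
    rw [hB, Finset.erase_insert hiJS]
  have e2 : B.erase j = insert i S := by
    rw [hB, Finset.erase_insert_of_ne hij, Finset.erase_insert hj]
  have e3 : (B.erase i).erase j = S := by
    rw [e1, Finset.erase_insert hj]
  rw [e3, e1, e2] at h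
  linarith

lemma marginal_mono {α : Type*} [DecidableEq α] (w : Finset α → ℝ)
    (pair : ∀ (S : Finset α) (i j : α), i ∉ S → j ∉ S → i ≠ j →
      w (insert i S) + w (insert j S) ≤ w S + w (insert i (insert j S))) :
    ∀ (n : ℕ) (S T : Finset α), (T \ S).card = n → S ⊆ T → ∀ i, i ∉ T →
      w (insert i S) - w S ≤ w (insert i T) - w T := by
  intro n
  induction n with
  | zero =>
    intro S T hc hST i hi
    have : S = T := by
      have : T \ S = ∅ := card_eq_zero.1 hc
      have := sdiff_eq_empty_iff_subset.1 this
      exact subset_antisymm hST this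
    rw [this]
  | succ n ih =>
    intro S T hc hST i hi
    have hne : (T \ S).Nonempty := by
      rw [← card_pos, hc]; omega
    obtain ⟨j, hjmem⟩ := hne
    rw [mem_sdiff] at hjmem
    obtain ⟨hjT, hjS⟩ := hjmem
    have hiS : i ∉ S := fun h => hi (hST h)
    have hijne : i ≠ j := fun h => hi (h ▸ hjT)
    have h1 := pair S i j hiS hjS hijne
    have hsub : insert j S ⊆ T := insert_subset hjT hST
    have hcard : (T \ insert j S).card = n := by
      have : T \ insert j S = (T \ S).erase j := by
        ext x; simp only [mem_sdiff, mem_insert, mem_erase]; tauto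
      rw [this, card_erase_of_mem (mem_sdiff.2 ⟨hjT, hjS⟩), hc]
      omega
    have h2 := ih (insert j S) T hcard hsub i hi
    linarith

/-- A game `w` is convex (supermodular) iff for all `A ⊆ B ⊆ N` with `|A| = 2`,
`Σ_{T : A ⊆ T ⊆ B} m^w(T) ≥ 0`. -/
theorem stmt8 {α : Type*} [Fintype α] [DecidableEq α] (w : Finset α → ℝ) (h0 : w ∅ = 0) :
    (∀ S T : Finset α, w S + w T ≤ w (S ∩ T) + w (S ∪ T)) ↔
      (∀ A B : Finset α, A ⊆ B → A.card = 2 →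
        0 ≤ ∑ T ∈ B.powerset.filter (fun T => A ⊆ T), mobius w T) := by
  constructor
  · intro hconv A B hAB hA2
    obtain ⟨i, j, hij, rfl⟩ := Finset.card_eq_two.1 hA2
    rw [key_identity w B i j hij]
    have hiB : i ∈ B := hAB (by simp)
    have hjB : j ∈ B := hAB (by simp)
    have h := hconv (B.erase i) (B.erase j)
    have e1 : B.erase i ∩ B.erase j = (B.erase i).erase j := by
      ext x; simp only [mem_inter, mem_erase]; tauto
    have e2 : B.erase i ∪ B.erase j = B := by
      ext x
      simp only [mem_union, mem_erase]
      constructor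
      · rintro (⟨_, h⟩ | ⟨_, h⟩) <;> exact h
      · intro hx
        by_cases hxi : x = i
        · right; exact ⟨hxi ▸ hij, hx⟩
        · left; exact ⟨hxi, hx⟩
    rw [e1, e2] at h
    linarith
  · intro hyp S T
    have pair := pair_of_sum w hyp
    have marg := marginal_mono w pair
    -- induction on card (S \ T)
    suffices h : ∀ (n : ℕ) (S T : Finset α), (S \ T).card = n →
        w S + w T ≤ w (S ∩ T) + w (S ∪ T) from h _ S T rfl
    intro n
    induction n with
    | zero =>
      intro S T hc
      have hST : S ⊆ T := sdiff_eq_empty_iff_subset.1 (card_eq_zero.1 hc)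
      rw [inter_eq_left.2 hST, union_eq_right.2 hST]
    | succ n ih =>
      intro S T hc
      have hne : (S \ T).Nonempty := by rw [← card_pos, hc]; omega
      obtain ⟨i, himem⟩ := hne
      rw [mem_sdiff] at himem
      obtain ⟨hiS, hiT⟩ := himem
      set S' := S.erase i with hS'
      have hcard : (S' \ T).card = n := by
        have : S' \ T = (S \ T).erase i := by
          ext x; simp only [mem_sdiff, mem_erase, hS']; tauto
        rw [this, card_erase_of_mem (mem_sdiff.2 ⟨hiS, hiT⟩), hc]
        omega
      have h1 := ih S' T hcard
      have hiS' : i ∉ S' := notMem_erase _ _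
      have hiST : i ∉ S' ∪ T := by simp [hiS', hiT]
      have hsub : S' ⊆ S' ∪ T := subset_union_left
      have h2 := marg ((S' ∪ T) \ S').card S' (S' ∪ T) rfl hsub i hiST
      have e1 : insert i S' = S := insert_erase hiS
      have e2 : insert i (S' ∪ T) = S ∪ T := by
        ext x
        simp only [mem_insert, mem_union, mem_erase, hS']
        constructor
        · rintro (rfl | ⟨_, h⟩ | h)
          · exact Or.inl hiS
          · tauto
          · tauto
        · rintro (h | h)
          · by_cases hx : x = i
            · exact Or.inl hx
            · exact Or.inr (Or.inl ⟨hx, h⟩)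
          · tauto
      have e3 : S' ∩ T = S ∩ T := by
        ext x
        simp only [mem_inter, mem_erase, hS']
        constructor
        · intro hx; exact ⟨hx.1.2, hx.2⟩
        · intro hx; exact ⟨⟨fun he => hiT (he ▸ hx.2), hx.1⟩, hx.2⟩
      rw [e1, e2] at h2
      rw [← e3]
      linarith
end

section
/- If (N,e) satisfies e(S)=0 for all S ∈ K, e(S) ≤ 0 for all S ∈ K^c, e({k}) = 0 for all singletons {k} ∈ K^c, and e is superadditive, then e(S) = 0 for all S ⊆ N (hence any nonzero superadditive game vanishing on K with nonpositive values must be strictly negative on some singleton not containing i). -/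
open Finset

/-- If a superadditive game `e` vanishes on `K = {S : i ∈ S} ∪ {∅}`, is nonpositive on
`K^c`, and vanishes on all singletons in `K^c`, then `e` is the zero game. -/
theorem stmt9 {α : Type*} [Fintype α] [DecidableEq α] (i : α) (e : Finset α → ℝ)
    (hK : ∀ S : Finset α, (i ∈ S ∨ S = ∅) → e S = 0)
    (hneg : ∀ S : Finset α, i ∉ S → S ≠ ∅ → e S ≤ 0)
    (hsing : ∀ k : α, k ≠ i → e {k} = 0)
    (hsup : ∀ S T : Finset α, Disjoint S T → e S + e T ≤ e (S ∪ T)) :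
    ∀ S : Finset α, e S = 0 := by
  have hge : ∀ S : Finset α, 0 ≤ e S := by
    intro S
    induction S using Finset.strongInduction with
    | _ S ih =>
      rcases eq_or_ne S ∅ with rfl | hne
      · rw [hK ∅ (Or.inr rfl)]
      · by_cases hi : i ∈ S
        · rw [hK S (Or.inl hi)]
        · obtain ⟨k, hk⟩ := Finset.nonempty_iff_ne_empty.mpr hne
          have hd : Disjoint (S.erase k) {k} := by
            simp [Finset.disjoint_singleton_right]
          have := hsup (S.erase k) {k} hd
          rw [Finset.erase_union_of_mem (by simp [hk]) ] at this
          have h1 : 0 ≤ e (S.erase k) := ih _ (Finset.erase_ssubset hk)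
          have h2 : e {k} = 0 := hsing k (fun h => hi (h ▸ hk))
          have : e (S ∪ {k}) = e S := by
            congr 1
            simp [Finset.union_eq_left, hk]
          linarith [hsup (S.erase k) {k} hd,
            (by rw [Finset.erase_union_of_mem (by simp [hk]), Finset.union_eq_left.mpr (by simp [hk])] : e (S.erase k ∪ {k}) = e S)]
  intro S
  rcases eq_or_ne S ∅ with rfl | hne
  · exact hK ∅ (Or.inr rfl)
  · by_cases hi : i ∈ S
    · exact hK S (Or.inl hi)
    · exact le_antisymm (hneg S hi hne) (hge S)
end

section
/- If an i-centered incomplete game (N,K,v) is monotonic on K, then the extension v₁ defined by v₁(S)=v(S) for S ∈ K and v₁(S)=0 for S ∈ K^c is a monotonic superadditive game; if (N,K,v) is additionally convex on K, then v₁ is convex. -/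
open Finset

/-- If an `i`-centered incomplete game is monotonic on `K`, then the extension `v₁`
(equal to `v` on `K` and `0` on `K^c`) is monotonic and superadditive; if the incomplete
game is additionally convex on `K`, then `v₁` is convex. -/
theorem stmt10 {α : Type*} [Fintype α] [DecidableEq α] (i : α) (v : Finset α → ℝ)
    (hv : v ∅ = 0)
    (hmono : ∀ S T : Finset α, (i ∈ S ∨ S = ∅) → (i ∈ T ∨ T = ∅) → S ⊆ T → v S ≤ v T) :
    (∀ S T : Finset α, S ⊆ T →
        (if i ∈ S ∨ S = ∅ then v S else 0) ≤ (if i ∈ T ∨ T = ∅ then v T else 0)) ∧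
    (∀ S T : Finset α, Disjoint S T →
        (if i ∈ S ∨ S = ∅ then v S else 0) + (if i ∈ T ∨ T = ∅ then v T else 0) ≤
          (if i ∈ S ∪ T ∨ S ∪ T = ∅ then v (S ∪ T) else 0)) ∧
    ((∀ S T : Finset α, (i ∈ S ∨ S = ∅) → (i ∈ T ∨ T = ∅) →
        v S + v T ≤ v (S ∩ T) + v (S ∪ T)) →
      ∀ S T : Finset α,
        (if i ∈ S ∨ S = ∅ then v S else 0) + (if i ∈ T ∨ T = ∅ then v T else 0) ≤
          (if i ∈ S ∩ T ∨ S ∩ T = ∅ then v (S ∩ T) else 0) +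
            (if i ∈ S ∪ T ∨ S ∪ T = ∅ then v (S ∪ T) else 0)) := by
  have hnn : ∀ S : Finset α, (0:ℝ) ≤ (if i ∈ S ∨ S = ∅ then v S else 0) := by
    intro S
    by_cases h : i ∈ S ∨ S = ∅
    · simp only [h, if_true]
      calc (0:ℝ) = v ∅ := hv.symm
      _ ≤ v S := hmono ∅ S (Or.inr rfl) h (empty_subset S)
    · simp [h]
  have hval : ∀ S : Finset α, i ∉ S → (if i ∈ S ∨ S = ∅ then v S else 0) = 0 := by
    intro S hS
    by_cases h : S = ∅
    · simp [h, hv]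
    · simp [hS, h]
  refine ⟨?_, ?_, ?_⟩
  · intro S T hST
    by_cases hS : i ∈ S ∨ S = ∅
    · rcases hS with hiS | hSe
      · have hiT : i ∈ T := hST hiS
        simp only [Or.inl hiS, Or.inl hiT, if_true]
        exact hmono S T (Or.inl hiS) (Or.inl hiT) hST
      · subst hSe; simp only [Or.inr rfl, if_true, hv]; exact hnn T
    · simp only [hS, if_false]; exact hnn T
  · intro S T hST
    by_cases hiS : i ∈ S
    · have hiT : i ∉ T := fun h => (disjoint_left.mp hST hiS) h
      rw [hval T hiT]
      simp only [Or.inl hiS, Or.inl (mem_union_left T hiS), if_true, add_zero]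
      exact hmono S (S ∪ T) (Or.inl hiS) (Or.inl (mem_union_left T hiS)) subset_union_left
    · by_cases hiT : i ∈ T
      · rw [hval S hiS]
        simp only [Or.inl hiT, Or.inl (mem_union_right S hiT), if_true, zero_add]
        exact hmono T (S ∪ T) (Or.inl hiT) (Or.inl (mem_union_right S hiT)) subset_union_right
      · rw [hval S hiS, hval T hiT, add_zero]; exact hnn (S ∪ T)
  · intro hconv S T
    by_cases hiS : i ∈ S
    · by_cases hiT : i ∈ T
      · simp only [Or.inl hiS, Or.inl hiT, Or.inl (mem_inter.mpr ⟨hiS, hiT⟩),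
          Or.inl (mem_union_left T hiS), if_true]
        exact hconv S T (Or.inl hiS) (Or.inl hiT)
      · rw [hval T hiT, add_zero, hval (S ∩ T) (fun h => hiT (mem_inter.mp h).2), zero_add]
        simp only [Or.inl hiS, Or.inl (mem_union_left T hiS), if_true]
        exact hmono S (S ∪ T) (Or.inl hiS) (Or.inl (mem_union_left T hiS)) subset_union_left
    · by_cases hiT : i ∈ T
      · rw [hval S hiS, zero_add, hval (S ∩ T) (fun h => hiS (mem_inter.mp h).1), zero_add]
        simp only [Or.inl hiT, Or.inl (mem_union_right S hiT), if_true]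
        exact hmono T (S ∪ T) (Or.inl hiT) (Or.inl (mem_union_right S hiT)) subset_union_right
      · rw [hval S hiS, hval T hiT, add_zero]
        exact add_nonneg (hnn _) (hnn _)
end

section
/- An i-centered incomplete game (N,K,v) is M^n-extendable (admits a monotonic extension) if and only if v is monotonic on K, i.e., v(S) ≤ v(T) for all S ⊆ T with S,T ∈ K. -/
open Finset

/-- An `i`-centered incomplete game `(N,K,v)` admits a monotonic extension iff `v` is
monotonic on `K = {S : i ∈ S} ∪ {∅}`. -/
theorem stmt11 {α : Type*} [Fintype α] [DecidableEq α] (i : α) (v : Finset α → ℝ)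
    (hv : v ∅ = 0) :
    (∃ w : Finset α → ℝ, w ∅ = 0 ∧ (∀ S T : Finset α, S ⊆ T → w S ≤ w T) ∧
        (∀ S : Finset α, (i ∈ S ∨ S = ∅) → w S = v S)) ↔
      (∀ S T : Finset α, (i ∈ S ∨ S = ∅) → (i ∈ T ∨ T = ∅) → S ⊆ T → v S ≤ v T) := by
  constructor
  · rintro ⟨w, h0, hmono, hext⟩ S T hS hT hST
    rw [← hext S hS, ← hext T hT]
    exact hmono S T hST
  · intro h
    refine ⟨fun S => if S = ∅ then 0 else v (insert i S), by simp, ?_, ?_⟩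
    · intro S T hST
      by_cases hS : S = ∅
      · simp only [hS, if_pos rfl]
        by_cases hT : T = ∅
        · simp [hT]
        · simp only [if_neg hT]
          rw [← hv]
          exact h ∅ (insert i T) (Or.inr rfl) (Or.inl (mem_insert_self i T)) (empty_subset _)
      · have hT : T ≠ ∅ := fun hT => hS (subset_empty.mp (hT ▸ hST))
        simp only [if_neg hS, if_neg hT]
        exact h _ _ (Or.inl (mem_insert_self i S)) (Or.inl (mem_insert_self i T))
          (insert_subset_insert i hST)
    · rintro S (hS | rfl)
      · have hS' : S ≠ ∅ := ne_empty_of_mem hS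
        simp [if_neg hS', insert_eq_self.mpr hS]
      · simp [hv]
end

section
/- If (N,e) is an extreme point of the polyhedron of monotonic extensions of an i-centered monotonic incomplete game, then for every S ∈ K^c there exists either k ∈ S with e(S) = e(S\{k}) or j ∈ N\S with e(S) = e(S∪{j}). -/
open Finset

/-- The set of monotonic extensions of an `i`-centered incomplete game `v`. -/
def monoExt {α : Type*} [DecidableEq α] (i : α) (v : Finset α → ℝ) :
    Set (Finset α → ℝ) :=
  {w | w ∅ = 0 ∧ (∀ S T : Finset α, S ⊆ T → w S ≤ w T) ∧
    ∀ S : Finset α, (i ∈ S ∨ S = ∅) → w S = v S}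

/-- If `e` is an extreme point of the polyhedron of monotonic extensions, then for every
`S ∈ K^c` there is `k ∈ S` with `e(S) = e(S \ {k})` or `j ∉ S` with `e(S) = e(S ∪ {j})`. -/
theorem stmt13 {α : Type*} [Fintype α] [DecidableEq α] (i : α) (v : Finset α → ℝ)
    (hv : v ∅ = 0)
    (hmono : ∀ S T : Finset α, (i ∈ S ∨ S = ∅) → (i ∈ T ∨ T = ∅) → S ⊆ T → v S ≤ v T)
    (e : Finset α → ℝ) (he : e ∈ monoExt i v)
    (hex : ∀ x : Finset α → ℝ, (fun S => e S + x S) ∈ monoExt i v →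
      (fun S => e S - x S) ∈ monoExt i v → x = 0) :
    ∀ S : Finset α, i ∉ S → S ≠ ∅ →
      (∃ k ∈ S, e S = e (S.erase k)) ∨ (∃ j : α, j ∉ S ∧ e S = e (insert j S)) := by
  classical
  intro S hiS hSne
  by_contra hcon
  push_neg at hcon
  obtain ⟨h1, h2⟩ := hcon
  obtain ⟨he0, hem, hefix⟩ := he
  -- strict inequalities
  have hlt1 : ∀ k ∈ S, e (S.erase k) < e S := fun k hk =>
    lt_of_le_of_ne (hem _ _ (erase_subset k S)) (fun h => h1 k hk h.symm)
  have hlt2 : ∀ j ∉ S, e S < e (insert j S) := fun j hj =>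
    lt_of_le_of_ne (hem _ _ (subset_insert j S)) (fun h => h2 j hj h)
  -- the finset of gaps
  set F : Finset ℝ := S.image (fun k => e S - e (S.erase k)) ∪
      Sᶜ.image (fun j => e (insert j S) - e S) with hF
  have hFne : F.Nonempty := by
    obtain ⟨k, hk⟩ := nonempty_iff_ne_empty.mpr hSne
    exact ⟨e S - e (S.erase k), mem_union_left _ (mem_image_of_mem _ hk)⟩
  set ε : ℝ := F.min' hFne with hε
  have hεpos : 0 < ε := by
    rw [hε, Finset.lt_min'_iff]
    intro y hy
    rcases Finset.mem_union.1 hy with hy | hy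
    · obtain ⟨k, hk, rfl⟩ := Finset.mem_image.1 hy
      have := hlt1 k hk; linarith
    · obtain ⟨j, hj, rfl⟩ := Finset.mem_image.1 hy
      have := hlt2 j (by simpa using hj); linarith
  -- key inequalities
  have hkey1 : ∀ T : Finset α, T ⊆ S → T ≠ S → e T ≤ e S - ε := by
    intro T hTS hTne
    obtain ⟨k, hkS, hkT⟩ := exists_of_ssubset (Finset.ssubset_iff_subset_ne.2 ⟨hTS, hTne⟩)
    have hε_le : ε ≤ e S - e (S.erase k) :=
      Finset.min'_le _ _ (mem_union_left _ (mem_image_of_mem _ hkS))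
    have : e T ≤ e (S.erase k) :=
      hem _ _ (fun x hx => Finset.mem_erase.2 ⟨fun h => hkT (h ▸ hx), hTS hx⟩)
    linarith
  have hkey2 : ∀ T : Finset α, S ⊆ T → S ≠ T → e S + ε ≤ e T := by
    intro T hST hTne
    obtain ⟨j, hjT, hjS⟩ := exists_of_ssubset (Finset.ssubset_iff_subset_ne.2 ⟨hST, hTne⟩)
    have hε_le : ε ≤ e (insert j S) - e S :=
      Finset.min'_le _ _ (mem_union_right _ (mem_image_of_mem _ (by simpa using hjS)))
    have : e (insert j S) ≤ e T := hem _ _ (insert_subset hjT hST)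
    linarith
  -- the perturbation
  set x : Finset α → ℝ := fun T => if T = S then ε else 0 with hx
  have hxS : x S = ε := by simp [hx]
  have hx0 : ∀ T, T ≠ S → x T = 0 := fun T h => by simp [hx, h]
  have hSK : ∀ T : Finset α, (i ∈ T ∨ T = ∅) → T ≠ S := by
    rintro T (hT | rfl) rfl
    · exact hiS hT
    · exact hSne rfl
  have hmem : ∀ s : ℝ, |s| ≤ 1 → (fun T => e T + s * x T) ∈ monoExt i v := by
    intro s hs
    obtain ⟨hs1, hs2⟩ := abs_le.1 hs
    have habs1 : s * ε ≤ ε := by nlinarith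
    have habs2 : -ε ≤ s * ε := by nlinarith
    refine ⟨by simp [hx0 ∅ (Ne.symm hSne), he0], ?_, ?_⟩
    · intro T U hTU
      dsimp only
      by_cases hT : T = S <;> by_cases hU : U = S
      · rw [hT, hU]
      · subst hT
        rw [hxS, hx0 U hU]
        have := hkey2 U hTU (fun h => hU h.symm)
        linarith
      · subst hU
        rw [hxS, hx0 T hT]
        have := hkey1 T hTU hT
        linarith
      · rw [hx0 T hT, hx0 U hU]
        simpa using hem T U hTU
    · intro T hT
      dsimp only
      rw [hx0 T (hSK T hT)]
      simpa using hefix T hT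
  have hp : (fun T => e T + x T) ∈ monoExt i v := by
    have h := hmem 1 (by norm_num)
    simpa using h
  have hm : (fun T => e T - x T) ∈ monoExt i v := by
    have h := hmem (-1) (by norm_num)
    convert h using 2 with T
    ring
  have hzero := hex x hp hm
  have hxS0 : x S = 0 := by rw [hzero]; rfl
  rw [hxS] at hxS0
  exact hεpos.ne' hxS0
end

section
/- Let (N,K,v) be an M^n-extendable i-centered incomplete game. Then the union of the cores over all monotonic extensions equals the core of v₁, i.e., ⋃_{w ∈ M^n(v)} C(w) = C(v₁), where v₁(S)=v(S) for S ∈ K and v₁(S)=0 for S ∈ K^c. -/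
open Finset

/-- The core of a cooperative game `w : 2^N → ℝ`. -/
def core {α : Type*} [Fintype α] (w : Finset α → ℝ) : Set (α → ℝ) :=
  {x | (∑ j, x j) = w Finset.univ ∧ ∀ S : Finset α, w S ≤ ∑ j ∈ S, x j}

/-- For an M^n-extendable `i`-centered incomplete game, the union of the cores over all
monotonic extensions equals the core of `v₁`. -/
theorem stmt14 {α : Type*} [Fintype α] [DecidableEq α] (i : α) (v : Finset α → ℝ)
    (hv : v ∅ = 0)
    (hmono : ∀ S T : Finset α, (i ∈ S ∨ S = ∅) → (i ∈ T ∨ T = ∅) → S ⊆ T → v S ≤ v T) :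
    (⋃ w ∈ {w : Finset α → ℝ | w ∅ = 0 ∧ (∀ S T : Finset α, S ⊆ T → w S ≤ w T) ∧
        ∀ S : Finset α, (i ∈ S ∨ S = ∅) → w S = v S}, core w) =
      core (fun S : Finset α => if i ∈ S ∨ S = ∅ then v S else 0) := by
  ext x
  simp only [Set.mem_iUnion, Set.mem_setOf_eq, core, exists_prop]
  constructor
  · rintro ⟨w, ⟨hw0, hwm, hwv⟩, hsum, hcore⟩
    refine ⟨?_, fun S => le_trans ?_ (hcore S)⟩
    · rw [hsum, if_pos (Or.inl (mem_univ i)), hwv univ (Or.inl (mem_univ i))]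
    · split_ifs with h
      · rw [hwv S h]
      · calc (0:ℝ) = w ∅ := hw0.symm
          _ ≤ w S := hwm ∅ S (empty_subset S)
  · rintro ⟨hsum, hcore⟩
    refine ⟨fun S => if i ∈ S ∨ S = ∅ then v S else 0, ⟨?_, ?_, ?_⟩, hsum, hcore⟩
    · simp [hv]
    · intro S T hST
      dsimp only
      split_ifs with hS hT hT
      · exact hmono S T hS hT hST
      · rcases hS with h | h
        · exact absurd (Or.inl (hST h)) hT
        · rw [h, hv]
      · calc (0:ℝ) = v ∅ := hv.symm
          _ ≤ v T := hmono ∅ T (Or.inr rfl) hT (empty_subset T)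
      · exact le_refl 0
    · intro S hS
      dsimp only
      rw [if_pos hS]
end
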